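/- arXiv:2006.02080 — 3 statements merged into one kernel-verified Lean document; each statement's English description precedes it below -/
import Mathlib

section
/- Let p, m be natural numbers with 0 < p < m and let d_{p+1}, ..., d_m be vectors in R^m. Then P_p (I - e_{p+1} e_{p+1}^T + d_{p+1} e_{p+1}^T) ⋯ (I - e_m e_m^T + d_m e_m^T) = P_p (I + d_{p+1} e_{p+1}^T) ⋯ (I + d_m e_m^T), where I is the m×m identity matrix, e_k is the k-th standard basis vector, and P_p is the diagonal projection matrix onto the first p coordinates. -/
/-- Outer product `u vᵀ` of two vectors in `ℝ^m`. -/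
def outerProd {m : ℕ} (u v : Fin m → ℝ) : Matrix (Fin m) (Fin m) ℝ :=
  fun i j => u i * v j

/-- The `k`-th canonical basis vector of `ℝ^m`. -/
def canonBasis {m : ℕ} (k : Fin m) : Fin m → ℝ := fun i => if i = k then 1 else 0

/-- `P_p`: diagonal projection matrix onto the first `p` coordinates. -/
def projMat (m p : ℕ) : Matrix (Fin m) (Fin m) ℝ :=
  Matrix.diagonal (fun i => if (i : ℕ) < p then (1 : ℝ) else 0)

lemma mul_outer_canon {m : ℕ} (A : Matrix (Fin m) (Fin m) ℝ) (u : Fin m → ℝ)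
    (k : Fin m) (i j : Fin m) :
    (A * outerProd u (canonBasis k)) i j = (∑ l, A i l * u l) * canonBasis k j := by
  simp [Matrix.mul_apply, outerProd, Finset.sum_mul, mul_assoc]

lemma aux_key {m : ℕ} (d : Fin m → Fin m → ℝ) :
    ∀ (L : List (Fin m)) (A : Matrix (Fin m) (Fin m) ℝ), L.Nodup →
      (∀ k ∈ L, ∀ i, A i k = 0) →
      A * (L.map (fun k => (1 : Matrix (Fin m) (Fin m) ℝ)
            - outerProd (canonBasis k) (canonBasis k) + outerProd (d k) (canonBasis k))).prod
      = A * (L.map fun k => (1 : Matrix (Fin m) (Fin m) ℝ)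
            + outerProd (d k) (canonBasis k)).prod := by
  intro L
  induction L with
  | nil => intro A _ _; simp
  | cons k t ih =>
    intro A hnd hcol
    have hAk : A * outerProd (canonBasis k) (canonBasis k) = 0 := by
      ext i j
      rw [mul_outer_canon]
      have : (∑ l, A i l * canonBasis k l) = A i k := by
        simp [canonBasis]
      simp [this, hcol k (by simp)]
    have hstep : A * ((1 : Matrix (Fin m) (Fin m) ℝ)
        - outerProd (canonBasis k) (canonBasis k) + outerProd (d k) (canonBasis k))
        = A * ((1 : Matrix (Fin m) (Fin m) ℝ) + outerProd (d k) (canonBasis k)) := by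
      rw [mul_add, mul_add, mul_sub, hAk, sub_zero]
    rw [List.map_cons, List.map_cons, List.prod_cons, List.prod_cons,
      ← mul_assoc, ← mul_assoc, hstep]
    set A' := A * ((1 : Matrix (Fin m) (Fin m) ℝ) + outerProd (d k) (canonBasis k))
    apply ih A' (List.Nodup.of_cons hnd)
    intro j hj i
    have hjk : j ≠ k := fun h => (List.nodup_cons.mp hnd).1 (h ▸ hj)
    have : A' i j = A i j + (∑ l, A i l * d k l) * canonBasis k j := by
      simp [A', mul_add, mul_outer_canon]
    rw [this]
    simp [canonBasis, hjk, hcol j (by simp [hj])]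

/-- Backpropagation algebra lemma: with factors indexed (0-based) by `k = p, …, m-1`
(corresponding to `e_{p+1}, …, e_m` in 1-based notation),
`P_p (I - e_{p+1}e_{p+1}ᵀ + d_{p+1}e_{p+1}ᵀ) ⋯ (I - e_m e_mᵀ + d_m e_mᵀ)
  = P_p (I + d_{p+1}e_{p+1}ᵀ) ⋯ (I + d_m e_mᵀ)`. -/
theorem backprop_algebra (p m : ℕ) (hp : 0 < p) (hpm : p < m)
    (d : Fin m → (Fin m → ℝ)) :
    projMat m p *
      (((List.finRange m).drop p).map
        (fun k => (1 : Matrix (Fin m) (Fin m) ℝ)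
          - outerProd (canonBasis k) (canonBasis k) + outerProd (d k) (canonBasis k))).prod
    = projMat m p *
      (((List.finRange m).drop p).map
        (fun k => (1 : Matrix (Fin m) (Fin m) ℝ) + outerProd (d k) (canonBasis k))).prod := by
  apply aux_key
  · exact (List.drop_sublist p (List.finRange m)).nodup (List.nodup_finRange m)
  · intro k hk i
    have hpk : p ≤ (k : ℕ) := by
      obtain ⟨n, hn, hget⟩ := List.mem_iff_getElem.mp hk
      have hn' : p + n < m := by simp at hn; omega
      have : (k : ℕ) = p + n := by
        rw [← hget, List.getElem_drop]
        simp
      omega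
    rcases eq_or_ne i k with rfl | h
    · simp [projMat, Matrix.diagonal_apply_eq, Nat.not_lt.mpr hpk]
    · simp [projMat, Matrix.diagonal_apply_ne _ h]
end

section
/- Let f be a continuous function on R^p admitting a selection representation (s, f_1, ..., f_m) with each f_i locally Lipschitz (e.g. C^1) and the segment-piecewise-constancy property of the index s. Then f is locally Lipschitz. -/
/-!
Near a point, all the pieces `fs j` are `K`-Lipschitz on a common ball. For `x, y` in that
ball the index `s` is constant on the open cells of a finite partition of the segment `[x, y]`,
so on each cell `f` coincides with a single `fs j` and is `K`-Lipschitz along the segment.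
Continuity of `f` carries this to the closed cells, and summing over the cells gives
`|f x - f y| ≤ K ‖x - y‖`.
-/

open Set Filter Topology NNReal AffineMap

theorem LocallyLipschitz.exists_mem_nhds_lipschitzOnWith_of_finite {ι α β : Type*}
    [Finite ι] [PseudoEMetricSpace α] [PseudoEMetricSpace β] {g : ι → α → β}
    (hg : ∀ i, LocallyLipschitz (g i)) (x : α) :
    ∃ K : ℝ≥0, ∃ t ∈ 𝓝 x, ∀ i, LipschitzOnWith K (g i) t := by
  have := Fintype.ofFinite ι
  choose K t ht hlip using fun i => hg i x
  exact ⟨Finset.univ.sup K, ⋂ i, t i, iInter_mem.2 ht, fun i =>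
    ((hlip i).weaken (Finset.le_sup (Finset.mem_univ i))).mono (iInter_subset t i)⟩

theorem Icc_subset_Icc_of_le_succ {β : Type*} [Preorder β] {a : ℕ → β} {N : ℕ}
    (ha : ∀ i < N, a i ≤ a (i + 1)) {i : ℕ} (hi : i < N) :
    Icc (a i) (a (i + 1)) ⊆ Icc (a 0) (a N) :=
  have hmono : MonotoneOn a (Iic N) :=
    monotoneOn_of_le_succ ordConnected_Iic fun j _ _ hj => ha j (Nat.lt_of_succ_le hj)
  Icc_subset_Icc (hmono (Nat.zero_le N) hi.le (Nat.zero_le i)) (hmono hi (mem_Iic.2 le_rfl) hi)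

theorem dist_le_mul_of_lipschitzOnWith_Ioo {Y : Type*} [PseudoMetricSpace Y] {φ : ℝ → Y}
    (hφ : Continuous φ) {K : ℝ≥0} {N : ℕ} {a : ℕ → ℝ} (ha : ∀ i < N, a i < a (i + 1))
    (hlip : ∀ i < N, LipschitzOnWith K φ (Ioo (a i) (a (i + 1)))) :
    dist (φ (a 0)) (φ (a N)) ≤ K * (a N - a 0) := by
  have hpiece : ∀ i < N, dist (φ (a i)) (φ (a (i + 1))) ≤ K * (a (i + 1) - a i) := by
    intro i hi
    have hIcc : LipschitzOnWith K φ (Icc (a i) (a (i + 1))) := by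
      simpa only [closure_Ioo (ha i hi).ne] using (hlip i hi).closure hφ.continuousOn
    have hle := (ha i hi).le
    simpa only [Real.dist_eq, abs_sub_comm (a i), abs_of_nonneg (sub_nonneg.2 hle)] using
      hIcc.dist_le_mul _ (left_mem_Icc.2 hle) _ (right_mem_Icc.2 hle)
  calc dist (φ (a 0)) (φ (a N))
      ≤ ∑ i ∈ Finset.range N, dist (φ (a i)) (φ (a (i + 1))) :=
        dist_le_range_sum_dist (fun i => φ (a i)) N
    _ ≤ ∑ i ∈ Finset.range N, K * (a (i + 1) - a i) :=
      Finset.sum_le_sum fun i hi => hpiece i (Finset.mem_range.1 hi)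
    _ = K * (a N - a 0) := by rw [← Finset.mul_sum, Finset.sum_range_sub]

/-- A continuous function admitting a selection representation by locally Lipschitz
pieces, with the segment-piecewise-constancy property of the index, is locally
Lipschitz. -/
theorem selection_locallyLipschitz {p m : ℕ}
    (f : EuclideanSpace ℝ (Fin p) → ℝ) (hf : Continuous f)
    (fs : Fin m → EuclideanSpace ℝ (Fin p) → ℝ)
    (hfs : ∀ i, LocallyLipschitz (fs i))
    (s : EuclideanSpace ℝ (Fin p) → Fin m)
    (hsel : ∀ x, f x = fs (s x) x)
    (hpc : ∀ x y : EuclideanSpace ℝ (Fin p), ∃ (N : ℕ) (a : ℕ → ℝ),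
      a 0 = 0 ∧ a N = 1 ∧ (∀ i < N, a i < a (i + 1)) ∧
      ∀ i < N, ∀ t₁ ∈ Ioo (a i) (a (i + 1)), ∀ t₂ ∈ Ioo (a i) (a (i + 1)),
        s (x + t₁ • (y - x)) = s (x + t₂ • (y - x))) :
    LocallyLipschitz f := by
  intro x₀
  obtain ⟨K, t, ht, hK⟩ := LocallyLipschitz.exists_mem_nhds_lipschitzOnWith_of_finite hfs x₀
  obtain ⟨r, hr, hball⟩ := Metric.mem_nhds_iff.1 ht
  refine ⟨K, Metric.ball x₀ r, Metric.ball_mem_nhds x₀ hr,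
    LipschitzOnWith.of_dist_le_mul fun x hx y hy => ?_⟩
  obtain ⟨N, a, ha0, haN, hlt, hconst⟩ := hpc x y
  have hline (u : ℝ) : lineMap x y u = x + u • (y - x) := by
    rw [lineMap_apply_module', add_comm]
  have hseg (j : Fin m) : LipschitzOnWith (K * nndist x y) (fs j ∘ lineMap x y) (Icc (0 : ℝ) 1) :=
    ((hK j).mono hball).comp (lipschitzWith_lineMap x y).lipschitzOnWith
      fun u hu => (convex_ball x₀ r).lineMap_mem hx hy hu
  have hpiece (i : ℕ) (hi : i < N) :
      LipschitzOnWith (K * nndist x y) (f ∘ lineMap x y) (Ioo (a i) (a (i + 1))) := by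
    obtain ⟨u₀, hu₀⟩ := nonempty_Ioo.2 (hlt i hi)
    have hsub : Ioo (a i) (a (i + 1)) ⊆ Icc (0 : ℝ) 1 :=
      ha0 ▸ haN ▸ Ioo_subset_Icc_self.trans (Icc_subset_Icc_of_le_succ (fun j hj => (hlt j hj).le) hi)
    intro u hu v hv
    have hsame {w} (hw : w ∈ Ioo (a i) (a (i + 1))) :
        f (lineMap x y w) = fs (s (lineMap x y u₀)) (lineMap x y w) := by
      rw [hsel, hline, hline, hconst i hi w hw u₀ hu₀]
    simpa only [Function.comp, hsame hu, hsame hv] using hseg _ (hsub hu) (hsub hv)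
  simpa [ha0, haN] using dist_le_mul_of_lipschitzOnWith_Ioo (hf.comp lineMap_continuous) hlt hpiece
end

section
/- Under the hypotheses of the composition proposition, the map x ↦ J_{F_{s(x)}}(x)^T ∇G_{t(F(x))}(F(x)) is a selection derivative of G ∘ F: it equals the gradient of the active C^1 piece G_j ∘ F_i at each point, where (i,j) = (s(x), t(F(x))). -/
section GradientChainRule

variable {𝕜 E F : Type*} [RCLike 𝕜]
  [NormedAddCommGroup E] [InnerProductSpace 𝕜 E] [CompleteSpace E]
  [NormedAddCommGroup F] [InnerProductSpace 𝕜 F] [CompleteSpace F]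
  {g : F → 𝕜} {g' : F} {f : E → F} {f' : E →L[𝕜] F} {x : E}

theorem HasGradientAt.comp_hasFDerivAt (hg : HasGradientAt g g' (f x))
    (hf : HasFDerivAt f f' x) :
    HasGradientAt (g ∘ f) (ContinuousLinearMap.adjoint f' g') x := by
  rw [hasGradientAt_iff_hasFDerivAt] at hg ⊢
  refine (hg.comp x hf).congr_fderiv ?_
  ext v
  simp [ContinuousLinearMap.adjoint_inner_left]

theorem gradient_comp (hg : DifferentiableAt 𝕜 g (f x)) (hf : DifferentiableAt 𝕜 f x) :
    gradient (g ∘ f) x = ContinuousLinearMap.adjoint (fderiv 𝕜 f x) (gradient g (f x)) :=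
  (hg.hasGradientAt.comp_hasFDerivAt hf.hasFDerivAt).gradient

end GradientChainRule

theorem selection_chain_rule_general {p₁ p₂ m l : ℕ}
    (F : EuclideanSpace ℝ (Fin p₁) → EuclideanSpace ℝ (Fin p₂))
    (Fs : Fin m → EuclideanSpace ℝ (Fin p₁) → EuclideanSpace ℝ (Fin p₂))
    (hFs : ∀ i, ContDiff ℝ 1 (Fs i))
    (s : EuclideanSpace ℝ (Fin p₁) → Fin m)
    (hFsel : ∀ x, F x = Fs (s x) x)
    (Gs : Fin l → EuclideanSpace ℝ (Fin p₂) → ℝ)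
    (hGs : ∀ j, ContDiff ℝ 1 (Gs j))
    (t : EuclideanSpace ℝ (Fin p₂) → Fin l) :
    ∀ x, gradient (fun y => Gs (t (F x)) (Fs (s x) y)) x
      = ContinuousLinearMap.adjoint (fderiv ℝ (Fs (s x)) x)
          (gradient (Gs (t (F x))) (F x)) := by
  intro x
  rw [hFsel x]
  exact gradient_comp ((hGs _).differentiable one_ne_zero _)
    ((hFs _).differentiable one_ne_zero x)

/-- Chain rule for selection derivatives: the map
`x ↦ J_{F_{s(x)}}(x)ᵀ ∇G_{t(F(x))}(F(x))` is a selection derivative of `G ∘ F`,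
i.e. it equals the gradient of the active `C¹` piece `G_{t(F(x))} ∘ F_{s(x)}` at each
point. -/
theorem selection_chain_rule {p₁ p₂ m l : ℕ}
    (F : EuclideanSpace ℝ (Fin p₁) → EuclideanSpace ℝ (Fin p₂)) (hF : Continuous F)
    (G : EuclideanSpace ℝ (Fin p₂) → ℝ) (hG : Continuous G)
    (Fs : Fin m → EuclideanSpace ℝ (Fin p₁) → EuclideanSpace ℝ (Fin p₂))
    (hFs : ∀ i, ContDiff ℝ 1 (Fs i))
    (s : EuclideanSpace ℝ (Fin p₁) → Fin m)
    (hFsel : ∀ x, F x = Fs (s x) x)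
    (Gs : Fin l → EuclideanSpace ℝ (Fin p₂) → ℝ)
    (hGs : ∀ j, ContDiff ℝ 1 (Gs j))
    (t : EuclideanSpace ℝ (Fin p₂) → Fin l)
    (hGsel : ∀ y, G y = Gs (t y) y) :
    ∀ x, gradient (fun y => Gs (t (F x)) (Fs (s x) y)) x
      = ContinuousLinearMap.adjoint (fderiv ℝ (Fs (s x)) x)
          (gradient (Gs (t (F x))) (F x)) :=
  selection_chain_rule_general F Fs hFs s hFsel Gs hGs t
end
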